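/- arXiv:1911.10263 — 2 statements merged into one kernel-verified Lean document; each statement's English description precedes it below -/
import Mathlib

section
/- With the same setup as the unfolding integration identity, for 1 ≤ p < ∞ and φ ∈ L^p(R^ε), T_ε φ ∈ L^p((0,1)×Y*) and ‖T_ε φ‖_{L^p((0,1)×Y*)} = (L/ε)^{1/p} ‖φ‖_{L^p(R^ε_0)} ≤ (L/ε)^{1/p} ‖φ‖_{L^p(R^ε)}. -/
/-!
On the cell `[k c L, (k + 1) c L) × Y*` of `I_ε × Y*` (with `c = ε ^ α`) the unfolded function is
`(x, y) ↦ φ (k c L + c y₁, ε y₂)`, independent of `x`. Integrating out `x` gives the factor `c L`,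
and the affine map `y ↦ (k c L + c y₁, ε y₂)`, of Jacobian `c ε`, carries `Y*` onto the `k`-th
period of the thin domain up to a null set, because `g` is `L`-periodic. Summing over the cells
gives `∫_{(0,1) × Y*} |T_ε φ|^p = (L / ε) ∫_{R^ε_0} |φ|^p`, first for `lintegral`,
where no integrability is needed, and from there for Bochner integrals.
-/

open MeasureTheory Set Function
open scoped ENNReal

/-- The paper's unfolding operator `T_ε`, with `c` standing for `ε ^ α`, so that
`I_ε = (0, c L (N + 1))` and `[x / c]_L = ⌊x / c / L⌋`. -/
noncomputable def unfoldingOp {β : Type*} [Zero β] (c ε L : ℝ) (N : ℕ) (φ : ℝ × ℝ → β)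
    (q : ℝ × ℝ × ℝ) : β :=
  if q.1 ∈ Ioo (0:ℝ) (c * L * (N + 1)) then
    φ (c * (⌊q.1 / c / L⌋ : ℝ) * L + c * q.2.1, ε * q.2.2) else 0

theorem apply_unfoldingOp {β γ : Type*} [Zero β] [Zero γ] {h : β → γ} (h0 : h 0 = 0)
    (c ε L : ℝ) (N : ℕ) (φ : ℝ × ℝ → β) (q : ℝ × ℝ × ℝ) :
    h (unfoldingOp c ε L N φ q) = unfoldingOp c ε L N (fun z => h (φ z)) q := by
  unfold unfoldingOp
  split_ifs <;> simp [h0]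

theorem unfoldingOp_eq_indicator {β : Type*} [Zero β] (c ε L : ℝ) (N : ℕ) (φ : ℝ × ℝ → β) :
    unfoldingOp c ε L N φ = (Prod.fst ⁻¹' Ioo (0:ℝ) (c * L * (N + 1))).indicator
      (fun q => φ (c * (⌊q.1 / c / L⌋ : ℝ) * L + c * q.2.1, ε * q.2.2)) := by
  ext q
  simp only [unfoldingOp, indicator, mem_preimage]

theorem Measurable.unfoldingOp {β : Type*} [Zero β] [MeasurableSpace β] {φ : ℝ × ℝ → β}
    (hφ : Measurable φ) (c ε L : ℝ) (N : ℕ) :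
    Measurable (unfoldingOp c ε L N φ) := by
  refine Measurable.ite (measurable_fst measurableSet_Ioo) (hφ.comp ?_) measurable_const
  fun_prop

theorem measurable_abs_unfoldingOp_rpow {φ : ℝ × ℝ → ℝ} (hφ : Measurable φ) (c ε L : ℝ) (N : ℕ)
    (p : ℝ) : Measurable fun q => |unfoldingOp c ε L N φ q| ^ p := by
  have := hφ.unfoldingOp c ε L N
  fun_prop

theorem Ico_zero_nat_mul_eq_biUnion {M : ℝ} (hM : 0 ≤ M) (n : ℕ) :
    Ico 0 (n * M) = ⋃ k ∈ Finset.range n, Ico (k * M) ((k + 1) * M) := by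
  refine subset_antisymm ?_ (iUnion₂_subset fun k hk => Ico_subset_Ico (by positivity) ?_)
  · simpa using Ico_subset_biUnion_Ico n (fun k : ℕ => (k : ℝ) * M)
  · have hkn : (k : ℝ) + 1 ≤ n := by exact_mod_cast Finset.mem_range.mp hk
    gcongr

theorem pairwiseDisjoint_Ico_nat_mul {M : ℝ} (hM : 0 ≤ M) (s : Set ℕ) :
    s.PairwiseDisjoint fun k : ℕ => Ico ((k : ℝ) * M) ((k + 1) * M) := by
  have hmono : Monotone fun k : ℕ => (k : ℝ) * M := fun i j hij =>
    mul_le_mul_of_nonneg_right (by exact_mod_cast hij) hM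
  simpa [PairwiseDisjoint, Order.succ_eq_add_one] using
    (hmono.pairwise_disjoint_on_Ico_succ.set_pairwise s)

theorem setLIntegral_preimage_Ico_inter_eq_sum {α : Type*} [MeasurableSpace α] {μ : Measure α}
    {π : α → ℝ} (hπ : Measurable π) {T : Set α} (hT : MeasurableSet T) {M : ℝ} (hM : 0 ≤ M)
    (n : ℕ) (f : α → ℝ≥0∞) :
    ∫⁻ a in π ⁻¹' Ico 0 (n * M) ∩ T, f a ∂μ =
      ∑ k ∈ Finset.range n, ∫⁻ a in π ⁻¹' Ico (k * M) ((k + 1) * M) ∩ T, f a ∂μ := by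
  rw [Ico_zero_nat_mul_eq_biUnion hM, preimage_iUnion₂, iUnion₂_inter]
  refine lintegral_biUnion_finset ?_ (fun k _ => (hπ measurableSet_Ico).inter hT) f
  exact fun i hi j hj hij =>
    ((pairwiseDisjoint_Ico_nat_mul hM _ hi hj hij).preimage π).mono inter_subset_left
      inter_subset_left

theorem map_volume_affine_prod {c e : ℝ} (hc : 0 < c) (he : 0 < e) (a : ℝ) :
    Measure.map (fun y : ℝ × ℝ => (a + c * y.1, e * y.2)) volume
      = ENNReal.ofReal (c * e)⁻¹ • volume := by
  have h1 : Measure.map (fun x : ℝ => a + c * x) volume = ENNReal.ofReal c⁻¹ • volume := by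
    rw [show (fun x : ℝ => a + c * x) = (a + ·) ∘ (c * ·) from rfl,
      ← Measure.map_map (measurable_const_add a) (measurable_const_mul c),
      Real.map_volume_mul_left hc.ne', Measure.map_smul, map_add_left_eq_self,
      abs_of_pos (inv_pos.mpr hc)]
  have h2 : Measure.map (fun x : ℝ => e * x) volume = ENNReal.ofReal e⁻¹ • volume := by
    rw [Real.map_volume_mul_left he.ne', abs_of_pos (inv_pos.mpr he)]
  rw [show (fun y : ℝ × ℝ => (a + c * y.1, e * y.2))
      = Prod.map (fun x : ℝ => a + c * x) (fun x : ℝ => e * x) from rfl, Measure.volume_eq_prod,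
    ← Measure.map_prod_map _ _ (by fun_prop) (by fun_prop), h1, h2, Measure.prod_smul_left,
    Measure.prod_smul_right, smul_smul, ← ENNReal.ofReal_mul (by positivity), mul_inv, mul_comm]

theorem setLIntegral_comp_affine_prod {c e : ℝ} (hc : 0 < c) (he : 0 < e) (a : ℝ)
    {f : ℝ × ℝ → ℝ≥0∞} (hf : Measurable f) {S : Set (ℝ × ℝ)} (hS : MeasurableSet S) :
    ∫⁻ y in (fun y : ℝ × ℝ => (a + c * y.1, e * y.2)) ⁻¹' S, f (a + c * y.1, e * y.2)
      = ENNReal.ofReal (c * e)⁻¹ * ∫⁻ z in S, f z := by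
  rw [← setLIntegral_map hS hf (by fun_prop), map_volume_affine_prod hc he,
    Measure.restrict_smul, lintegral_smul_measure, smul_eq_mul]

theorem regionBetween_eq_preimage_inter {α : Type*} (f g : α → ℝ) (s : Set α) :
    regionBetween f g s = Prod.fst ⁻¹' s ∩ regionBetween f g univ := by
  ext; simp [regionBetween]

theorem regionBetween_ae_eq {α : Type*} [MeasureSpace α] (f g : α → ℝ) {s t : Set α}
    (h : s =ᵐ[volume] t) : regionBetween f g s =ᵐ[volume] regionBetween f g t := by
  rw [regionBetween_eq_preimage_inter f g s, regionBetween_eq_preimage_inter f g t]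
  exact (Measure.quasiMeasurePreserving_fst.preimage_ae_eq h).inter Filter.EventuallyEq.rfl

section

variable {g : ℝ → ℝ} {c ε L : ℝ}

theorem mul_floor_div_div_mul_of_mem_Ico {x : ℝ} (hc : 0 < c) (hL : 0 < L) {k : ℕ}
    (hx : x ∈ Ico (k * (c * L)) ((k + 1) * (c * L))) :
    c * (⌊x / c / L⌋ : ℝ) * L = k * (c * L) := by
  have hcL : 0 < c * L := mul_pos hc hL
  have hfloor : ⌊x / c / L⌋ = k := by
    rw [Int.floor_eq_iff, div_div, le_div_iff₀ hcL, div_lt_iff₀ hcL]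
    push_cast
    exact hx
  rw [hfloor]
  push_cast
  ring

theorem preimage_affine_regionBetween_Ico (hc : 0 < c) (hε : 0 < ε) (hg : Periodic g L) (k : ℕ) :
    (fun y : ℝ × ℝ => (k * (c * L) + c * y.1, ε * y.2)) ⁻¹'
        regionBetween 0 (fun x => ε * g (x / c)) (Ico (k * (c * L)) ((k + 1) * (c * L)))
      = regionBetween 0 g (Ico 0 L) := by
  ext y
  have harg : (k * (c * L) + c * y.1) / c = y.1 + k * L := by field_simp; ring
  simp only [regionBetween, mem_preimage, mem_ofPred_eq, mem_Ico, mem_Ioo, Pi.zero_apply, harg,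
    hg.nat_mul k y.1]
  constructor
  · rintro ⟨⟨h1, h2⟩, h3, h4⟩
    refine ⟨⟨?_, ?_⟩, ?_, ?_⟩ <;> nlinarith
  · rintro ⟨⟨h1, h2⟩, h3, h4⟩
    refine ⟨⟨?_, ?_⟩, ?_, ?_⟩ <;> nlinarith

theorem setLIntegral_unfold_Ico_cell (hc : 0 < c) (hε : 0 < ε) (hL : 0 < L)
    (hg : Periodic g L) (hgm : Measurable g) {f : ℝ × ℝ → ℝ≥0∞} (hf : Measurable f) (k : ℕ) :
    ∫⁻ q in Ico (k * (c * L)) ((k + 1) * (c * L)) ×ˢ regionBetween 0 g (Ioo 0 L),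
        f (c * (⌊q.1 / c / L⌋ : ℝ) * L + c * q.2.1, ε * q.2.2)
      = ENNReal.ofReal (L / ε) * ∫⁻ z in regionBetween 0 (fun x => ε * g (x / c))
          (Ico (k * (c * L)) ((k + 1) * (c * L))), f z := by
  have hcL : 0 < c * L := mul_pos hc hL
  have hY : MeasurableSet (regionBetween 0 g (Ioo 0 L)) :=
    measurableSet_regionBetween measurable_const hgm measurableSet_Ioo
  have hstrip : MeasurableSet (regionBetween 0 (fun x => ε * g (x / c))
      (Ico (k * (c * L)) ((k + 1) * (c * L)))) :=
    measurableSet_regionBetween measurable_const (by fun_prop) measurableSet_Ico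
  calc _ = ∫⁻ q in Ico (k * (c * L)) ((k + 1) * (c * L)) ×ˢ regionBetween 0 g (Ioo 0 L),
          f (k * (c * L) + c * q.2.1, ε * q.2.2) :=
        setLIntegral_congr_fun (measurableSet_Ico.prod hY)
          (fun q hq => by rw [mul_floor_div_div_mul_of_mem_Ico hc hL hq.1])
    _ = volume (Ico (k * (c * L)) ((k + 1) * (c * L))) *
          ∫⁻ y in regionBetween 0 g (Ioo 0 L), f (k * (c * L) + c * y.1, ε * y.2) := by
        rw [Measure.volume_eq_prod, setLIntegral_prod _ (by fun_prop)]
        simp only [setLIntegral_const]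
        rw [mul_comm]
    _ = ENNReal.ofReal (c * L) * (ENNReal.ofReal (c * ε)⁻¹ * ∫⁻ z in regionBetween 0
          (fun x => ε * g (x / c)) (Ico (k * (c * L)) ((k + 1) * (c * L))), f z) := by
        rw [Real.volume_Ico, show ((k : ℝ) + 1) * (c * L) - k * (c * L) = c * L by ring,
          setLIntegral_congr (regionBetween_ae_eq 0 g Ioo_ae_eq_Ico),
          ← preimage_affine_regionBetween_Ico hc hε hg k,
          setLIntegral_comp_affine_prod hc hε _ hf hstrip]
    _ = _ := by
        rw [← mul_assoc, ← ENNReal.ofReal_mul hcL.le]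
        congr 2
        field_simp

theorem setLIntegral_unfold_Ico (hc : 0 < c) (hε : 0 < ε) (hL : 0 < L)
    (hg : Periodic g L) (hgm : Measurable g) {f : ℝ × ℝ → ℝ≥0∞} (hf : Measurable f) (n : ℕ) :
    ∫⁻ q in Ico 0 (n * (c * L)) ×ˢ regionBetween 0 g (Ioo 0 L),
        f (c * (⌊q.1 / c / L⌋ : ℝ) * L + c * q.2.1, ε * q.2.2)
      = ENNReal.ofReal (L / ε) *
          ∫⁻ z in regionBetween 0 (fun x => ε * g (x / c)) (Ico 0 (n * (c * L))), f z := by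
  have hcL : 0 < c * L := mul_pos hc hL
  have hY : MeasurableSet (regionBetween 0 g (Ioo 0 L)) :=
    measurableSet_regionBetween measurable_const hgm measurableSet_Ioo
  have hR : MeasurableSet (regionBetween 0 (fun x => ε * g (x / c)) univ) :=
    measurableSet_regionBetween measurable_const (by fun_prop) MeasurableSet.univ
  rw [prod_eq, regionBetween_eq_preimage_inter _ _ (Ico 0 _),
    setLIntegral_preimage_Ico_inter_eq_sum measurable_fst (measurable_snd hY) hcL.le,
    setLIntegral_preimage_Ico_inter_eq_sum measurable_fst hR hcL.le, Finset.mul_sum]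
  refine Finset.sum_congr rfl fun k _ => ?_
  rw [← prod_eq, ← regionBetween_eq_preimage_inter]
  exact setLIntegral_unfold_Ico_cell hc hε hL hg hgm hf k

theorem setLIntegral_unfoldingOp (hc : 0 < c) (hε : 0 < ε) (hL : 0 < L)
    (hg : Periodic g L) (hgm : Measurable g) {N : ℕ} (hN : c * L * (N + 1) ≤ 1)
    {f : ℝ × ℝ → ℝ≥0∞} (hf : Measurable f) :
    ∫⁻ q in Ioo 0 1 ×ˢ regionBetween 0 g (Ioo 0 L), unfoldingOp c ε L N f q
      = ENNReal.ofReal (L / ε) *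
          ∫⁻ z in regionBetween 0 (fun x => ε * g (x / c)) (Ioo 0 (c * L * (N + 1))), f z := by
  have hI : Prod.fst ⁻¹' Ioo 0 (c * L * (N + 1)) ∩ Ioo 0 1 ×ˢ regionBetween 0 g (Ioo 0 L)
      = Ioo 0 (c * L * (N + 1)) ×ˢ regionBetween 0 g (Ioo 0 L) := by
    ext q
    simp only [mem_inter_iff, mem_preimage, mem_prod, mem_Ioo]
    constructor
    · rintro ⟨hq, -, hy⟩
      exact ⟨hq, hy⟩
    · rintro ⟨hq, hy⟩
      exact ⟨hq, ⟨hq.1, hq.2.trans_le hN⟩, hy⟩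
  have hE : c * L * (N + 1) = ((N + 1 : ℕ) : ℝ) * (c * L) := by push_cast; ring
  rw [unfoldingOp_eq_indicator, setLIntegral_indicator (measurable_fst measurableSet_Ioo), hI,
    setLIntegral_congr (μ := volume)
      (Measure.set_prod_ae_eq Ioo_ae_eq_Ico Filter.EventuallyEq.rfl),
    setLIntegral_congr (regionBetween_ae_eq _ _ Ioo_ae_eq_Ico), hE]
  exact setLIntegral_unfold_Ico hc hε hL hg hgm hf (N + 1)

theorem setLIntegral_ofReal_abs_unfoldingOp_rpow (hc : 0 < c) (hε : 0 < ε) (hL : 0 < L)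
    (hg : Periodic g L) (hgm : Measurable g) {N : ℕ} (hN : c * L * (N + 1) ≤ 1) {p : ℝ}
    (hp : 0 < p) {φ : ℝ × ℝ → ℝ} (hφ : Measurable φ) :
    ∫⁻ q in Ioo 0 1 ×ˢ regionBetween 0 g (Ioo 0 L),
        ENNReal.ofReal (|unfoldingOp c ε L N φ q| ^ p)
      = ENNReal.ofReal (L / ε) * ∫⁻ z in regionBetween 0 (fun x => ε * g (x / c))
          (Ioo 0 (c * L * (N + 1))), ENNReal.ofReal (|φ z| ^ p) := by
  simp only [apply_unfoldingOp (h := fun t : ℝ => ENNReal.ofReal (|t| ^ p))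
    (by simp [Real.zero_rpow hp.ne'])]
  exact setLIntegral_unfoldingOp hc hε hL hg hgm hN (by fun_prop)

theorem integrableOn_abs_unfoldingOp_rpow (hc : 0 < c) (hε : 0 < ε) (hL : 0 < L)
    (hg : Periodic g L) (hgm : Measurable g) {N : ℕ} (hN : c * L * (N + 1) ≤ 1) {p : ℝ}
    (hp : 0 < p) {φ : ℝ × ℝ → ℝ} (hφm : Measurable φ)
    (hφ : IntegrableOn (fun z => |φ z| ^ p)
      (regionBetween 0 (fun x => ε * g (x / c)) (Ioo 0 (c * L * (N + 1))))) :
    IntegrableOn (fun q => |unfoldingOp c ε L N φ q| ^ p)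
      (Ioo 0 1 ×ˢ regionBetween 0 g (Ioo 0 L)) := by
  have hTm := measurable_abs_unfoldingOp_rpow hφm c ε L N p
  rw [IntegrableOn, ← lintegral_ofReal_ne_top_iff_integrable hTm.aestronglyMeasurable
    (ae_of_all _ fun q => by positivity),
    setLIntegral_ofReal_abs_unfoldingOp_rpow hc hε hL hg hgm hN hp hφm]
  exact ENNReal.mul_ne_top ENNReal.ofReal_ne_top ((lintegral_ofReal_ne_top_iff_integrable
    hφ.aestronglyMeasurable (ae_of_all _ fun z => by positivity)).mpr hφ)

theorem integral_abs_unfoldingOp_rpow (hc : 0 < c) (hε : 0 < ε) (hL : 0 < L)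
    (hg : Periodic g L) (hgm : Measurable g) {N : ℕ} (hN : c * L * (N + 1) ≤ 1) {p : ℝ}
    (hp : 0 < p) {φ : ℝ × ℝ → ℝ} (hφm : Measurable φ) :
    ∫ q in Ioo 0 1 ×ˢ regionBetween 0 g (Ioo 0 L), |unfoldingOp c ε L N φ q| ^ p
      = L / ε * ∫ z in regionBetween 0 (fun x => ε * g (x / c)) (Ioo 0 (c * L * (N + 1))),
          |φ z| ^ p := by
  have hTm := measurable_abs_unfoldingOp_rpow hφm c ε L N p
  rw [integral_eq_lintegral_of_nonneg_ae (ae_of_all _ fun q => by positivity)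
      hTm.aestronglyMeasurable,
    integral_eq_lintegral_of_nonneg_ae (ae_of_all _ fun z => by positivity)
      (by fun_prop : Measurable fun z => |φ z| ^ p).aestronglyMeasurable,
    setLIntegral_ofReal_abs_unfoldingOp_rpow hc hε hL hg hgm hN hp hφm, ENNReal.toReal_mul,
    ENNReal.toReal_ofReal (div_nonneg hL.le hε.le)]

end

theorem stmt13_general (g : ℝ → ℝ) (L : ℝ) (hL : 0 < L)
    (hgc : Continuous g) (hgper : ∀ x, g (x + L) = g x)
    (α ε : ℝ) (hε : 0 < ε)
    (N : ℕ) (hN : ε ^ α * L * (N + 1) ≤ 1)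
    (p : ℝ) (hp : 1 ≤ p)
    (φ : ℝ × ℝ → ℝ) (hφm : Measurable φ)
    (hφ : IntegrableOn (fun z => |φ z| ^ p)
      {z : ℝ × ℝ | 0 < z.1 ∧ z.1 < 1 ∧ 0 < z.2 ∧ z.2 < ε * g (z.1 / ε ^ α)}) :
    IntegrableOn (fun q : ℝ × ℝ × ℝ =>
        |if q.1 ∈ Ioo (0:ℝ) (ε ^ α * L * (N + 1)) then
            φ (ε ^ α * (⌊q.1 / ε ^ α / L⌋ : ℝ) * L + ε ^ α * q.2.1, ε * q.2.2)
          else 0| ^ p)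
      {q : ℝ × ℝ × ℝ |
        q.1 ∈ Ioo (0:ℝ) 1 ∧ 0 < q.2.1 ∧ q.2.1 < L ∧ 0 < q.2.2 ∧ q.2.2 < g q.2.1} ∧
    (∫ q in {q : ℝ × ℝ × ℝ |
        q.1 ∈ Ioo (0:ℝ) 1 ∧ 0 < q.2.1 ∧ q.2.1 < L ∧ 0 < q.2.2 ∧ q.2.2 < g q.2.1},
        |if q.1 ∈ Ioo (0:ℝ) (ε ^ α * L * (N + 1)) then
            φ (ε ^ α * (⌊q.1 / ε ^ α / L⌋ : ℝ) * L + ε ^ α * q.2.1, ε * q.2.2)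
          else 0| ^ p) ^ (1 / p)
      = (L / ε) ^ (1 / p) *
        (∫ z in {z : ℝ × ℝ | z.1 ∈ Ioo (0:ℝ) (ε ^ α * L * (N + 1)) ∧
            0 < z.2 ∧ z.2 < ε * g (z.1 / ε ^ α)}, |φ z| ^ p) ^ (1 / p) ∧
    (L / ε) ^ (1 / p) *
        (∫ z in {z : ℝ × ℝ | z.1 ∈ Ioo (0:ℝ) (ε ^ α * L * (N + 1)) ∧
            0 < z.2 ∧ z.2 < ε * g (z.1 / ε ^ α)}, |φ z| ^ p) ^ (1 / p)
      ≤ (L / ε) ^ (1 / p) *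
        (∫ z in {z : ℝ × ℝ | 0 < z.1 ∧ z.1 < 1 ∧ 0 < z.2 ∧
            z.2 < ε * g (z.1 / ε ^ α)}, |φ z| ^ p) ^ (1 / p) := by
  have hc : 0 < ε ^ α := Real.rpow_pos_of_pos hε α
  have hp0 : 0 < p := by linarith
  have hY : {q : ℝ × ℝ × ℝ |
      q.1 ∈ Ioo (0:ℝ) 1 ∧ 0 < q.2.1 ∧ q.2.1 < L ∧ 0 < q.2.2 ∧ q.2.2 < g q.2.1}
      = Ioo 0 1 ×ˢ regionBetween 0 g (Ioo 0 L) := by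
    ext; simp [regionBetween, and_assoc]
  have hR : {z : ℝ × ℝ | 0 < z.1 ∧ z.1 < 1 ∧ 0 < z.2 ∧ z.2 < ε * g (z.1 / ε ^ α)}
      = regionBetween 0 (fun x => ε * g (x / ε ^ α)) (Ioo 0 1) := by
    ext; simp [regionBetween, and_assoc]
  have hR0 : regionBetween 0 (fun x => ε * g (x / ε ^ α)) (Ioo 0 (ε ^ α * L * (N + 1)))
      ⊆ regionBetween 0 (fun x => ε * g (x / ε ^ α)) (Ioo 0 1) :=
    fun z hz => ⟨⟨hz.1.1, hz.1.2.trans_le hN⟩, hz.2⟩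
  rw [hR] at hφ
  show IntegrableOn (fun q => |unfoldingOp (ε ^ α) ε L N φ q| ^ p) _ ∧
    (∫ q in _, |unfoldingOp (ε ^ α) ε L N φ q| ^ p) ^ (1 / p) = _ ∧ _
  rw [hY, hR, integral_abs_unfoldingOp_rpow hc hε hL hgper hgc.measurable hN hp0 hφm]
  have hJ0 : 0 ≤ ∫ z in regionBetween 0 (fun x => ε * g (x / ε ^ α))
      (Ioo 0 (ε ^ α * L * (N + 1))), |φ z| ^ p :=
    setIntegral_nonneg_of_ae (ae_of_all _ fun z => by positivity)
  refine ⟨integrableOn_abs_unfoldingOp_rpow hc hε hL hgper hgc.measurable hN hp0 hφm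
    (hφ.mono_set hR0), Real.mul_rpow (div_nonneg hL.le hε.le) hJ0, ?_⟩
  have hmono := setIntegral_mono_set hφ (ae_of_all _ fun z => by positivity) hR0.eventuallyLE
  exact mul_le_mul_of_nonneg_left (Real.rpow_le_rpow hJ0 hmono (by positivity)) (by positivity)

/-- L^p norm identity for the unfolding operator:
`‖T_ε φ‖_{L^p((0,1)×Y*)} = (L/ε)^{1/p} ‖φ‖_{L^p(R^ε_0)} ≤ (L/ε)^{1/p} ‖φ‖_{L^p(R^ε)}`. -/
theorem stmt13 (g : ℝ → ℝ) (L g0 g1 : ℝ) (hL : 0 < L)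
    (hgc : Continuous g) (hgper : ∀ x, g (x + L) = g x)
    (hg0 : 0 < g0) (hg : ∀ x, g0 ≤ g x ∧ g x ≤ g1)
    (α ε : ℝ) (hα : 0 < α) (hε : 0 < ε)
    (N : ℕ) (hN : ε ^ α * L * (N + 1) ≤ 1)
    (hNmax : ∀ m : ℕ, ε ^ α * L * (m + 1) ≤ 1 → m ≤ N)
    (p : ℝ) (hp : 1 ≤ p)
    (φ : ℝ × ℝ → ℝ) (hφm : Measurable φ)
    (hφ : IntegrableOn (fun z => |φ z| ^ p)
      {z : ℝ × ℝ | 0 < z.1 ∧ z.1 < 1 ∧ 0 < z.2 ∧ z.2 < ε * g (z.1 / ε ^ α)}) :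
    IntegrableOn (fun q : ℝ × ℝ × ℝ =>
        |if q.1 ∈ Ioo (0:ℝ) (ε ^ α * L * (N + 1)) then
            φ (ε ^ α * (⌊q.1 / ε ^ α / L⌋ : ℝ) * L + ε ^ α * q.2.1, ε * q.2.2)
          else 0| ^ p)
      {q : ℝ × ℝ × ℝ |
        q.1 ∈ Ioo (0:ℝ) 1 ∧ 0 < q.2.1 ∧ q.2.1 < L ∧ 0 < q.2.2 ∧ q.2.2 < g q.2.1} ∧
    (∫ q in {q : ℝ × ℝ × ℝ |
        q.1 ∈ Ioo (0:ℝ) 1 ∧ 0 < q.2.1 ∧ q.2.1 < L ∧ 0 < q.2.2 ∧ q.2.2 < g q.2.1},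
        |if q.1 ∈ Ioo (0:ℝ) (ε ^ α * L * (N + 1)) then
            φ (ε ^ α * (⌊q.1 / ε ^ α / L⌋ : ℝ) * L + ε ^ α * q.2.1, ε * q.2.2)
          else 0| ^ p) ^ (1 / p)
      = (L / ε) ^ (1 / p) *
        (∫ z in {z : ℝ × ℝ | z.1 ∈ Ioo (0:ℝ) (ε ^ α * L * (N + 1)) ∧
            0 < z.2 ∧ z.2 < ε * g (z.1 / ε ^ α)}, |φ z| ^ p) ^ (1 / p) ∧
    (L / ε) ^ (1 / p) *
        (∫ z in {z : ℝ × ℝ | z.1 ∈ Ioo (0:ℝ) (ε ^ α * L * (N + 1)) ∧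
            0 < z.2 ∧ z.2 < ε * g (z.1 / ε ^ α)}, |φ z| ^ p) ^ (1 / p)
      ≤ (L / ε) ^ (1 / p) *
        (∫ z in {z : ℝ × ℝ | 0 < z.1 ∧ z.1 < 1 ∧ 0 < z.2 ∧
            z.2 < ε * g (z.1 / ε ^ α)}, |φ z| ^ p) ^ (1 / p) :=
  stmt13_general g L hL hgc hgper α ε hε N hN p hp φ hφm hφ
end

section
/- Let h : ℝ → ℝ be C¹, L_h-periodic, positive, with bounded derivative, and let α > β > 0, γ > 0. Let g : ℝ → ℝ be continuous and positive, and φ : (0,1)×(0,L_g)×ℝ → ℝ be continuous in the third variable and bounded. Fix (x, y₁) and set ϱ_ε = ε^α⌊x/ε^α⌋ L_g + ε^α y₁. Then (1/ε^γ) | ∫_{g(y₁) - ε^γ h(ϱ_ε/ε^β)}^{g(y₁)} φ(x,y₁,y₂) dy₂ − ∫_{g(y₁) - ε^γ h(x/ε^β)}^{g(y₁)} φ(x,y₁,y₂) dy₂ | ≤ sup|φ| · ‖h'‖_∞ · |ϱ_ε − x| / ε^β, and hence this quantity tends to 0 as ε → 0⁺. -/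
open MeasureTheory Filter Topology

/-- The unfolding base point `ϱ_ε = ε^α [x/ε^α]_{L_g} L_g + ε^α y₁`. -/
noncomputable def rhoPt (Lg α x y₁ ε : ℝ) : ℝ :=
  ε ^ α * (⌊x / (ε ^ α * Lg)⌋ : ℝ) * Lg + ε ^ α * y₁

/-!
Writing both integrals with the common upper limit `g y₁`, their difference is an integral of
`φ` over an interval of length `ε^γ |h(ϱ_ε/ε^β) - h(x/ε^β)| ≤ ε^γ ‖h'‖_∞ |ϱ_ε - x| / ε^β`, so
the factor `ε^γ` cancels. The base point `ϱ_ε` lies in the same `ε^α L_g`-cell as `x`, hence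
`|ϱ_ε - x| / ε^β ≤ L_g ε^(α-β) → 0`.
-/

lemma abs_sub_le_of_abs_deriv_le {h : ℝ → ℝ} {M : ℝ} (hh : Differentiable ℝ h)
    (hM : ∀ t, |deriv h t| ≤ M) (u v : ℝ) : |h u - h v| ≤ M * |u - v| :=
  Convex.norm_image_sub_le_of_norm_deriv_le (fun t _ => hh t) (fun t _ => hM t)
    convex_univ (Set.mem_univ v) (Set.mem_univ u)

lemma abs_integral_sub_integral_le {f : ℝ → ℝ} {M : ℝ} (hf : Continuous f)
    (hM : ∀ t, |f t| ≤ M) (a b c : ℝ) :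
    |(∫ t in a..c, f t) - ∫ t in b..c, f t| ≤ M * |b - a| := by
  have hsplit : (∫ t in a..c, f t) - (∫ t in b..c, f t) = ∫ t in a..b, f t := by
    rw [← intervalIntegral.integral_add_adjacent_intervals
      (hf.intervalIntegrable a b) (hf.intervalIntegrable b c)]
    ring
  rw [hsplit]
  exact intervalIntegral.norm_integral_le_of_norm_le_const (f := f) fun t _ => hM t

lemma abs_integral_sub_integral_scaled_le {f h : ℝ → ℝ} {Mf Mh s : ℝ} (hf : Continuous f)
    (hMf : ∀ t, |f t| ≤ Mf) (hh : ∀ u v, |h u - h v| ≤ Mh * |u - v|) (hs : 0 < s)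
    (c u v : ℝ) :
    (1 / s) * |(∫ t in (c - s * h u)..c, f t) - ∫ t in (c - s * h v)..c, f t|
      ≤ Mf * Mh * |u - v| := by
  have hMf0 : 0 ≤ Mf := (abs_nonneg _).trans (hMf 0)
  have hlen : |(c - s * h v) - (c - s * h u)| = s * |h u - h v| := by
    rw [show (c - s * h v) - (c - s * h u) = s * (h u - h v) by ring, abs_mul, abs_of_pos hs]
  calc (1 / s) * |(∫ t in (c - s * h u)..c, f t) - ∫ t in (c - s * h v)..c, f t|
      ≤ (1 / s) * (Mf * (s * (Mh * |u - v|))) := by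
        refine mul_le_mul_of_nonneg_left ?_ (by positivity)
        refine (abs_integral_sub_integral_le hf hMf _ _ _).trans ?_
        rw [hlen]
        gcongr
        exact hh u v
    _ = Mf * Mh * |u - v| := by field_simp

lemma abs_rhoPt_sub_lt {Lg α x y₁ ε : ℝ} (hLg : 0 < Lg) (hy₁ : y₁ ∈ Set.Ico 0 Lg)
    (hε : 0 < ε) : |rhoPt Lg α x y₁ ε - x| < ε ^ α * Lg := by
  have hεα : 0 < ε ^ α := Real.rpow_pos_of_pos hε α
  set c := ε ^ α * Lg
  have hc : 0 < c := mul_pos hεα hLg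
  have hρ : rhoPt Lg α x y₁ ε - x = ε ^ α * y₁ - c * Int.fract (x / c) := by
    rw [Int.fract, mul_sub, mul_div_cancel₀ _ hc.ne', rhoPt]
    ring
  rw [hρ]
  exact abs_sub_lt_of_nonneg_of_lt (mul_nonneg hεα.le hy₁.1)
    (mul_lt_mul_of_pos_left hy₁.2 hεα) (mul_nonneg hc.le (Int.fract_nonneg _))
    (mul_lt_of_lt_one_right hc (Int.fract_lt_one _))

lemma tendsto_rpow_nhdsGT_zero {y : ℝ} (hy : 0 < y) :
    Tendsto (fun x : ℝ => x ^ y) (𝓝[>] 0) (𝓝 0) := by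
  have h := (Real.continuous_rpow_const hy.le).tendsto 0
  rw [Real.zero_rpow hy.ne'] at h
  exact h.mono_left nhdsWithin_le_nhds

theorem stmt19_general (h g : ℝ → ℝ) (Lg : ℝ) (hLg : 0 < Lg)
    (hhC1 : ContDiff ℝ 1 h)
    (Mh : ℝ) (hMh : ∀ t, |deriv h t| ≤ Mh)
    (α β γ : ℝ) (hαβ : β < α)
    (φ : ℝ → ℝ → ℝ → ℝ) (Mφ : ℝ)
    (hφc : ∀ x y₁, Continuous (φ x y₁)) (hφb : ∀ x y₁ y₂, |φ x y₁ y₂| ≤ Mφ)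
    (x y₁ : ℝ) (hy₁ : y₁ ∈ Set.Ico 0 Lg) :
    (∀ ε : ℝ, 0 < ε →
      (1 / ε ^ γ) *
        |(∫ y₂ in (g y₁ - ε ^ γ * h (rhoPt Lg α x y₁ ε / ε ^ β))..(g y₁), φ x y₁ y₂) -
          ∫ y₂ in (g y₁ - ε ^ γ * h (x / ε ^ β))..(g y₁), φ x y₁ y₂|
        ≤ Mφ * Mh * |rhoPt Lg α x y₁ ε - x| / ε ^ β) ∧
    Tendsto (fun ε : ℝ =>
        (1 / ε ^ γ) *
          |(∫ y₂ in (g y₁ - ε ^ γ * h (rhoPt Lg α x y₁ ε / ε ^ β))..(g y₁), φ x y₁ y₂) -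
            ∫ y₂ in (g y₁ - ε ^ γ * h (x / ε ^ β))..(g y₁), φ x y₁ y₂|)
      (𝓝[>] 0) (𝓝 0) := by
  have hlip := abs_sub_le_of_abs_deriv_le (hhC1.differentiable one_ne_zero) hMh
  have key : ∀ ε : ℝ, 0 < ε →
      (1 / ε ^ γ) *
        |(∫ y₂ in (g y₁ - ε ^ γ * h (rhoPt Lg α x y₁ ε / ε ^ β))..(g y₁), φ x y₁ y₂) -
          ∫ y₂ in (g y₁ - ε ^ γ * h (x / ε ^ β))..(g y₁), φ x y₁ y₂|
        ≤ Mφ * Mh * |rhoPt Lg α x y₁ ε - x| / ε ^ β := fun ε hε => by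
    have hεβ : 0 < ε ^ β := Real.rpow_pos_of_pos hε β
    have := abs_integral_sub_integral_scaled_le (hφc x y₁) (hφb x y₁) hlip
      (Real.rpow_pos_of_pos hε γ) (g y₁) (rhoPt Lg α x y₁ ε / ε ^ β) (x / ε ^ β)
    rwa [div_sub_div_same, abs_div, abs_of_pos hεβ, ← mul_div_assoc] at this
  have hlim := (tendsto_rpow_nhdsGT_zero (sub_pos.mpr hαβ)).const_mul (Mφ * Mh * Lg)
  rw [mul_zero] at hlim
  refine ⟨key, squeeze_zero' ?_ ?_ hlim⟩
  · filter_upwards [self_mem_nhdsWithin] with ε (hε : 0 < ε)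
    have := Real.rpow_pos_of_pos hε γ
    positivity
  · filter_upwards [self_mem_nhdsWithin] with ε (hε : 0 < ε)
    have hMφMh : 0 ≤ Mφ * Mh :=
      mul_nonneg ((abs_nonneg _).trans (hφb x y₁ 0)) ((abs_nonneg _).trans (hMh 0))
    calc _ ≤ Mφ * Mh * |rhoPt Lg α x y₁ ε - x| / ε ^ β := key ε hε
      _ ≤ Mφ * Mh * (ε ^ α * Lg) / ε ^ β := by
        gcongr
        exact (abs_rhoPt_sub_lt hLg hy₁ hε).le
      _ = Mφ * Mh * Lg * ε ^ (α - β) := by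
        rw [Real.rpow_sub hε]
        ring

/-- Key reiterated-homogenization estimate: the difference of the two concentrated
integrals is bounded by `sup|φ| · ‖h'‖_∞ · |ϱ_ε - x| / ε^β`, and hence tends to `0`
as `ε → 0⁺` (since `α > β`). -/
theorem stmt19 (h g : ℝ → ℝ) (Lg Lh : ℝ) (hLg : 0 < Lg) (hLh : 0 < Lh)
    (hhC1 : ContDiff ℝ 1 h) (hhper : ∀ t, h (t + Lh) = h t) (hhpos : ∀ t, 0 < h t)
    (Mh : ℝ) (hMh : ∀ t, |deriv h t| ≤ Mh)
    (α β γ : ℝ) (hβ : 0 < β) (hαβ : β < α) (hγ : 0 < γ)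
    (hgc : Continuous g) (hgpos : ∀ t, 0 < g t)
    (φ : ℝ → ℝ → ℝ → ℝ) (Mφ : ℝ)
    (hφc : ∀ x y₁, Continuous (φ x y₁)) (hφb : ∀ x y₁ y₂, |φ x y₁ y₂| ≤ Mφ)
    (x y₁ : ℝ) (hx : x ∈ Set.Ioo (0:ℝ) 1) (hy₁ : y₁ ∈ Set.Ico 0 Lg) :
    (∀ ε : ℝ, 0 < ε →
      (1 / ε ^ γ) *
        |(∫ y₂ in (g y₁ - ε ^ γ * h (rhoPt Lg α x y₁ ε / ε ^ β))..(g y₁), φ x y₁ y₂) -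
          ∫ y₂ in (g y₁ - ε ^ γ * h (x / ε ^ β))..(g y₁), φ x y₁ y₂|
        ≤ Mφ * Mh * |rhoPt Lg α x y₁ ε - x| / ε ^ β) ∧
    Tendsto (fun ε : ℝ =>
        (1 / ε ^ γ) *
          |(∫ y₂ in (g y₁ - ε ^ γ * h (rhoPt Lg α x y₁ ε / ε ^ β))..(g y₁), φ x y₁ y₂) -
            ∫ y₂ in (g y₁ - ε ^ γ * h (x / ε ^ β))..(g y₁), φ x y₁ y₂|)
      (𝓝[>] 0) (𝓝 0) :=
  stmt19_general h g Lg hLg hhC1 Mh hMh α β γ hαβ φ Mφ hφc hφb x y₁ hy₁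
end
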